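/- Let s,t∈S with ⟨α_s,α_t⟩=-1, and let β∈Φ^+ with ⟨α_s,β⟩=0 and ⟨α_t,β⟩=0. Then T(s,β) = T(t,β). -/
import Mathlib


noncomputable section

namespace ArtinInj

/-- `altProd a b m` is the alternating product `prod(a,b;m) = abab⋯` with `m` factors. -/
def altProd {G : Type*} [Monoid G] (a b : G) : ℕ → G
  | 0 => 1
  | n + 1 => a * altProd b a n

variable {S : Type} [DecidableEq S] [Fintype S]

/-- The braid relations on the free monoid over `S`.  Here `M s t = 0` encodes
`m_{s,t} = ∞`. -/
def braidRel (M : CoxeterMatrix S) (u v : FreeMonoid S) : Prop :=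
  ∃ s t : S, s ≠ t ∧ M s t ≠ 0 ∧
    u = altProd (FreeMonoid.of s) (FreeMonoid.of t) (M s t) ∧
    v = altProd (FreeMonoid.of t) (FreeMonoid.of s) (M s t)

/-- The Artin monoid `G_Γ⁺` of a Coxeter matrix. -/
abbrev ArtinMonoid (M : CoxeterMatrix S) : Type := PresentedMonoid (braidRel M)

/-- The generators `σ_s` of the Artin monoid. -/
def sigma (M : CoxeterMatrix S) (s : S) : ArtinMonoid M := PresentedMonoid.of (braidRel M) s

/-- The braid relators in the free group over `S`. -/
def artinRels (M : CoxeterMatrix S) : Set (FreeGroup S) :=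
  {r | ∃ s t : S, s ≠ t ∧ M s t ≠ 0 ∧
    r = altProd (FreeGroup.of s) (FreeGroup.of t) (M s t) *
        (altProd (FreeGroup.of t) (FreeGroup.of s) (M s t))⁻¹}

/-- The Artin group `G_Γ` of a Coxeter matrix. -/
abbrev ArtinGroup (M : CoxeterMatrix S) : Type := PresentedGroup (artinRels M)

/-- The generators `σ_s` of the Artin group. -/
def agen (M : CoxeterMatrix S) (s : S) : ArtinGroup M := PresentedGroup.of s

/-- The partial order on the Artin monoid: `g < h ⟺ ∃ f, g f = h`. -/
def mle {M : CoxeterMatrix S} (g h : ArtinMonoid M) : Prop := ∃ f, g * f = h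

/-- A Coxeter matrix is of small type when all off-diagonal entries are 2 or 3. -/
def SmallType (M : CoxeterMatrix S) : Prop := ∀ s t : S, s ≠ t → M s t = 2 ∨ M s t = 3

/-- `m ≥ 3` in `{2,3,...,∞}`, where `∞` is encoded by `0`. -/
def BigEntry (m : ℕ) : Prop := m = 0 ∨ 3 ≤ m

/-- A Coxeter matrix has no triangle when there are no three distinct vertices with
pairwise entries `≥ 3`. -/
def NoTriangle (M : CoxeterMatrix S) : Prop :=
  ¬ ∃ s t r : S, s ≠ t ∧ s ≠ r ∧ t ≠ r ∧
      BigEntry (M s t) ∧ BigEntry (M s r) ∧ BigEntry (M t r)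

variable {W : Type} [Group W]

/-- The partial order `u < v` on the Coxeter group: `l(v) = l(u) + l(u⁻¹ v)`. -/
def wle {M : CoxeterMatrix S} (cs : CoxeterSystem M W) (u v : W) : Prop :=
  cs.length v = cs.length u + cs.length (u⁻¹ * v)

/-- The simple root `α_s`. -/
def sroot (s : S) : S → ℝ := Pi.single s 1

/-- The entries `⟨α_s, α_t⟩ = -2 cos (π / m_{s,t})` of the canonical bilinear form
(equal to `-2` when `m_{s,t} = ∞`, encoded by `M s t = 0`). -/
def formEnt (M : CoxeterMatrix S) (s t : S) : ℝ :=
  if M s t = 0 then -2 else -2 * Real.cos (Real.pi / (M s t : ℝ))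

/-- The canonical symmetric bilinear form `⟨·,·⟩` on `U = ℝ^S`. -/
def form (M : CoxeterMatrix S) (x v : S → ℝ) : ℝ :=
  ∑ s : S, ∑ t : S, x s * v t * formEnt M s t

/-- `ρ` is the canonical (geometric) representation of the Coxeter system. -/
def IsGeomRep (M : CoxeterMatrix S) (cs : CoxeterSystem M W)
    (ρ : W →* ((S → ℝ) →ₗ[ℝ] (S → ℝ))) : Prop :=
  ∀ (s : S) (x : S → ℝ), ρ (cs.simple s) x = x - form M (sroot s) x • sroot s

/-- The root system `Φ = {w α_s}`. -/
def Phi (ρ : W →* ((S → ℝ) →ₗ[ℝ] (S → ℝ))) : Set (S → ℝ) :=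
  {u | ∃ (w : W) (s : S), u = ρ w (sroot s)}

/-- The positive roots `Φ⁺`. -/
def PhiPlus (ρ : W →* ((S → ℝ) →ₗ[ℝ] (S → ℝ))) : Set (S → ℝ) :=
  {u | u ∈ Phi ρ ∧ ∀ s : S, 0 ≤ u s}

/-- The negative roots `Φ⁻ = -Φ⁺`. -/
def PhiMinus (ρ : W →* ((S → ℝ) →ₗ[ℝ] (S → ℝ))) : Set (S → ℝ) :=
  {u | -u ∈ PhiPlus ρ}

/-- The inversion set `Φ_w = {β ∈ Φ⁺ : w⁻¹ β ∈ Φ⁻}`. -/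
def invSet (ρ : W →* ((S → ℝ) →ₗ[ℝ] (S → ℝ))) (w : W) : Set (S → ℝ) :=
  {u | u ∈ PhiPlus ρ ∧ ρ w⁻¹ u ∈ PhiMinus ρ}

/-- The depth `dp(β) = min { l(w) : w β ∈ Φ⁻ }` of a positive root. -/
def dp {M : CoxeterMatrix S} (cs : CoxeterSystem M W)
    (ρ : W →* ((S → ℝ) →ₗ[ℝ] (S → ℝ))) (u : S → ℝ) : ℕ :=
  sInf {l : ℕ | ∃ w : W, ρ w u ∈ PhiMinus ρ ∧ cs.length w = l}

/-- Closed subsets of `Φ⁺`. -/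
def ClosedSub (M : CoxeterMatrix S) (ρ : W →* ((S → ℝ) →ₗ[ℝ] (S → ℝ)))
    (A : Set (S → ℝ)) : Prop :=
  A ⊆ PhiPlus ρ ∧ A.Finite ∧
    (∀ a ∈ A, ∀ b ∈ A, -1 ≤ form M a b) ∧
    (∀ a ∈ A, ∀ b ∈ A, form M a b = -1 → a + b ∈ A)

/-- The field `K = ℚ(x,y)` of rational functions in two variables over `ℚ`. -/
abbrev KK : Type := FractionRing (MvPolynomial (Fin 2) ℚ)

/-- The variable `x` of `K`. -/
def Xv : KK := algebraMap (MvPolynomial (Fin 2) ℚ) KK (MvPolynomial.X 0)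

/-- The variable `y` of `K`. -/
def Yv : KK := algebraMap (MvPolynomial (Fin 2) ℚ) KK (MvPolynomial.X 1)

/-- The image in `K` of a polynomial of `ℚ[y]`. -/
def Ty (p : Polynomial ℚ) : KK := Polynomial.eval₂ (Rat.castHom KK) Yv p

/-- The `K`-vector space `V` with basis `{e_β : β ∈ Φ⁺}`. -/
abbrev VV (ρ : W →* ((S → ℝ) →ₗ[ℝ] (S → ℝ))) : Type := ↥(PhiPlus ρ) →₀ KK

/-- The basis vectors `e_β` of `V` (defined to be `0` for `β ∉ Φ⁺`). -/
def ebase (ρ : W →* ((S → ℝ) →ₗ[ℝ] (S → ℝ))) (u : S → ℝ) : VV ρ := by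
  haveI := Classical.dec (u ∈ PhiPlus ρ)
  exact if h : u ∈ PhiPlus ρ then Finsupp.single (⟨u, h⟩ : ↥(PhiPlus ρ)) (1 : KK) else 0

/-- `φ : S → End(V)` is the family of linear maps `φ_s` of Section 3 of the paper. -/
def PhiMapSpec (M : CoxeterMatrix S) (ρ : W →* ((S → ℝ) →ₗ[ℝ] (S → ℝ)))
    (φ : S → Module.End KK (VV ρ)) : Prop :=
  ∀ s : S, ∀ u ∈ PhiPlus ρ,
    (u = sroot s → φ s (ebase ρ u) = 0) ∧
    (form M (sroot s) u = 0 → φ s (ebase ρ u) = ebase ρ u) ∧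
    (0 < form M (sroot s) u → u ≠ sroot s →
      φ s (ebase ρ u) = Yv • ebase ρ (u - form M (sroot s) u • sroot s)) ∧
    (form M (sroot s) u < 0 →
      φ s (ebase ρ u) = (1 - Yv) • ebase ρ u + ebase ρ (u - form M (sroot s) u • sroot s))

/-- `T : S × Φ⁺ → ℚ[y]` is the family of polynomials `T(s,β)` defined by (D1)–(D9),
by induction on the depth of `β`; the recursion may be applied with any `t ∈ S`
such that `dp(t β) = dp(β) - 1`. -/
def TSpec (M : CoxeterMatrix S) (cs : CoxeterSystem M W)
    (ρ : W →* ((S → ℝ) →ₗ[ℝ] (S → ℝ))) (T : S → (S → ℝ) → Polynomial ℚ) : Prop :=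
  (∀ s : S, T s (sroot s) = Polynomial.X ^ 2) ∧
  (∀ s t : S, t ≠ s → T s (sroot t) = 0) ∧
  (∀ s t : S, ∀ u ∈ PhiPlus ρ, 2 ≤ dp cs ρ u →
    0 < form M (sroot t) u → dp cs ρ (ρ (cs.simple t) u) = dp cs ρ u - 1 →
    (0 < form M (sroot s) u →
      T s u = Polynomial.X ^ (dp cs ρ u) * (Polynomial.X - 1)) ∧
    (form M (sroot s) u = 0 → form M (sroot s) (sroot t) = 0 →
      T s u = Polynomial.X * T s (u - form M (sroot t) u • sroot t)) ∧
    (form M (sroot s) u = 0 → form M (sroot s) (sroot t) = -1 →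
      T s u = (Polynomial.X - 1) * T s (u - form M (sroot t) u • sroot t) +
        Polynomial.X * T t (u - form M (sroot t) u • sroot s - form M (sroot t) u • sroot t)) ∧
    (form M (sroot s) u < 0 → form M (sroot s) (sroot t) = 0 →
      T s u = Polynomial.X * T s (u - form M (sroot t) u • sroot t)) ∧
    (form M (sroot s) u < 0 → form M (sroot s) (sroot t) = -1 →
      -(form M (sroot s) u) < form M (sroot t) u →
      T s u = (Polynomial.X - 1) * T s (u - form M (sroot t) u • sroot t) +
        Polynomial.X * T t (u - (form M (sroot t) u + form M (sroot s) u) • sroot s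
          - form M (sroot t) u • sroot t)) ∧
    (form M (sroot s) u < 0 → form M (sroot s) (sroot t) = -1 →
      -(form M (sroot s) u) = form M (sroot t) u →
      T s u = T t (u - form M (sroot t) u • sroot t) +
        (Polynomial.X - 1) * T s (u - form M (sroot t) u • sroot t)) ∧
    (form M (sroot s) u < 0 → form M (sroot s) (sroot t) = -1 →
      form M (sroot t) u < -(form M (sroot s) u) →
      T s u = Polynomial.X * T s (u - form M (sroot t) u • sroot t) +
        T t (u - form M (sroot t) u • sroot t) +
        Polynomial.X ^ (dp cs ρ u - 1) * (1 - Polynomial.X)))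

/-- `ψ : S → End(V)` is the family of linear maps `ψ_s(e_β) = φ_s(e_β) + x T(s,β) e_{α_s}`. -/
def PsiSpec (M : CoxeterMatrix S) (ρ : W →* ((S → ℝ) →ₗ[ℝ] (S → ℝ)))
    (T : S → (S → ℝ) → Polynomial ℚ) (ψ : S → Module.End KK (VV ρ)) : Prop :=
  ∀ s : S, ∀ u ∈ PhiPlus ρ,
    (u = sroot s → ψ s (ebase ρ u) = (Xv * Ty (T s u)) • ebase ρ (sroot s)) ∧
    (form M (sroot s) u = 0 →
      ψ s (ebase ρ u) = ebase ρ u + (Xv * Ty (T s u)) • ebase ρ (sroot s)) ∧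
    (0 < form M (sroot s) u → u ≠ sroot s →
      ψ s (ebase ρ u) = Yv • ebase ρ (u - form M (sroot s) u • sroot s) +
        (Xv * Ty (T s u)) • ebase ρ (sroot s)) ∧
    (form M (sroot s) u < 0 →
      ψ s (ebase ρ u) = (1 - Yv) • ebase ρ u +
        ebase ρ (u - form M (sroot s) u • sroot s) +
        (Xv * Ty (T s u)) • ebase ρ (sroot s))

/-- The set `σ_s ∗ A` (Lemma 4.4 of the paper). -/
def starSet (M : CoxeterMatrix S) (ρ : W →* ((S → ℝ) →ₗ[ℝ] (S → ℝ)))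
    (s : S) (A : Set (S → ℝ)) : Set (S → ℝ) :=
  {sroot s} ∪
  {u | u ∈ PhiPlus ρ ∧ form M (sroot s) u = 0 ∧ u ∈ A} ∪
  {u | u ∈ PhiPlus ρ ∧ 0 < form M (sroot s) u ∧ u ≠ sroot s ∧
        u - form M (sroot s) u • sroot s ∈ A} ∪
  {u | u ∈ PhiPlus ρ ∧ form M (sroot s) u < 0 ∧ u ∈ A ∧
        u - form M (sroot s) u • sroot s ∈ A}


set_option linter.unusedSectionVars false

section Lemma35Aux

variable {M : CoxeterMatrix S}

lemma formEnt_comm (p q : S) : formEnt M p q = formEnt M q p := by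
  rw [formEnt, formEnt, M.symmetric]

lemma formEnt_self (p : S) : formEnt M p p = 2 := by
  rw [formEnt]
  have h1 : M p p = 1 := M.diagonal p
  rw [h1]
  norm_num

lemma formEnt_of_two {p q : S} (h : M p q = 2) : formEnt M p q = 0 := by
  rw [formEnt, h]
  norm_num [Real.cos_pi_div_two]

lemma formEnt_of_three {p q : S} (h : M p q = 3) : formEnt M p q = -1 := by
  rw [formEnt, h]
  norm_num [Real.cos_pi_div_three]

lemma form_comm (x v : S → ℝ) : form M x v = form M v x := by
  rw [form, form, Finset.sum_comm]
  exact Finset.sum_congr rfl fun q _ => Finset.sum_congr rfl fun p _ => by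
    rw [formEnt_comm]; ring

lemma form_add_right (x v w : S → ℝ) : form M x (v + w) = form M x v + form M x w := by
  rw [form, form, form, ← Finset.sum_add_distrib]
  refine Finset.sum_congr rfl fun p _ => ?_
  rw [← Finset.sum_add_distrib]
  exact Finset.sum_congr rfl fun q _ => by simp [Pi.add_apply]; ring

lemma form_smul_right (c : ℝ) (x v : S → ℝ) : form M x (c • v) = c * form M x v := by
  rw [form, form, Finset.mul_sum]
  refine Finset.sum_congr rfl fun p _ => ?_
  rw [Finset.mul_sum]
  exact Finset.sum_congr rfl fun q _ => by simp [Pi.smul_apply, smul_eq_mul]; ring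

lemma form_neg_right (x v : S → ℝ) : form M x (-v) = -form M x v := by
  have := form_smul_right (M := M) (-1) x v
  simpa [neg_one_smul] using this

lemma form_sub_right (x v w : S → ℝ) : form M x (v - w) = form M x v - form M x w := by
  rw [sub_eq_add_neg, form_add_right, form_neg_right, sub_eq_add_neg]

lemma form_add_left (x y v : S → ℝ) : form M (x + y) v = form M x v + form M y v := by
  rw [form_comm, form_add_right, form_comm v x, form_comm v y]

lemma form_smul_left (c : ℝ) (x v : S → ℝ) : form M (c • x) v = c * form M x v := by
  rw [form_comm, form_smul_right, form_comm]

lemma form_sub_left (x y v : S → ℝ) : form M (x - y) v = form M x v - form M y v := by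
  rw [form_comm, form_sub_right, form_comm v x, form_comm v y]

lemma form_sroot_left (p : S) (v : S → ℝ) :
    form M (sroot p) v = ∑ q : S, v q * formEnt M p q := by
  rw [form]
  rw [Finset.sum_eq_single p]
  · refine Finset.sum_congr rfl fun q _ => ?_
    simp [sroot, Pi.single_apply]
  · intro b _ hb
    apply Finset.sum_eq_zero
    intro q _
    simp [sroot, Pi.single_apply, hb]
  · intro h; exact absurd (Finset.mem_univ p) h

lemma form_sroot_sroot (p q : S) : form M (sroot p) (sroot q) = formEnt M p q := by
  rw [form_sroot_left]
  rw [Finset.sum_eq_single q]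
  · simp [sroot, Pi.single_apply]
  · intro b _ hb; simp [sroot, Pi.single_apply, hb]
  · intro h; exact absurd (Finset.mem_univ q) h

lemma form_sroot_self (p : S) : form M (sroot p) (sroot p) = 2 := by
  rw [form_sroot_sroot, formEnt_self]

lemma form_sroot_cases (hsmall : SmallType M) {p q : S} (h : p ≠ q) :
    (form M (sroot p) (sroot q) = 0 ∧ M p q = 2) ∨
    (form M (sroot p) (sroot q) = -1 ∧ M p q = 3) := by
  rcases hsmall p q h with h2 | h3
  · exact Or.inl ⟨by rw [form_sroot_sroot, formEnt_of_two h2], h2⟩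
  · exact Or.inr ⟨by rw [form_sroot_sroot, formEnt_of_three h3], h3⟩

variable {cs : CoxeterSystem M W} {rho : W →* ((S → ℝ) →ₗ[ℝ] (S → ℝ))}

lemma rho_mul_apply (u v : W) (x : S → ℝ) : rho (u * v) x = rho u (rho v x) := by
  rw [map_mul, Module.End.mul_apply]

lemma rho_one_apply (x : S → ℝ) : rho (1 : W) x = x := by
  rw [map_one, Module.End.one_apply]

lemma rho_simple_sq (p : S) (x : S → ℝ) :
    rho (cs.simple p) (rho (cs.simple p) x) = x := by
  rw [← rho_mul_apply, cs.simple_mul_simple_self, rho_one_apply]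

lemma rho_simple_sroot_self (hrho : IsGeomRep M cs rho) (p : S) :
    rho (cs.simple p) (sroot p) = -sroot p := by
  rw [hrho, form_sroot_self]
  ext q
  simp [Pi.sub_apply]
  ring

lemma form_rho_simple (hrho : IsGeomRep M cs rho) (p : S) (x y : S → ℝ) :
    form M (rho (cs.simple p) x) (rho (cs.simple p) y) = form M x y := by
  rw [hrho, hrho, form_sub_left, form_sub_right, form_sub_right, form_smul_left,
    form_smul_right, form_smul_left, form_smul_right, form_sroot_self,
    form_comm x (sroot p)]
  ring

lemma form_rho (hrho : IsGeomRep M cs rho) (w : W) (x y : S → ℝ) :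
    form M (rho w x) (rho w y) = form M x y := by
  obtain ⟨ω, rfl⟩ := cs.wordProd_surjective w
  induction ω with
  | nil => rw [CoxeterSystem.wordProd_nil, rho_one_apply, rho_one_apply]
  | cons i ω ih =>
      rw [cs.wordProd_cons, rho_mul_apply, rho_mul_apply, form_rho_simple hrho]
      exact ih

lemma sroot_mem_phi (p : S) : sroot p ∈ Phi rho :=
  ⟨1, p, (rho_one_apply (sroot p)).symm⟩

lemma rho_mem_phi {v : S → ℝ} (w : W) (hv : v ∈ Phi rho) : rho w v ∈ Phi rho := by
  obtain ⟨w', p, rfl⟩ := hv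
  exact ⟨w * w', p, (rho_mul_apply w w' (sroot p)).symm⟩

lemma neg_mem_phi (hrho : IsGeomRep M cs rho) {v : S → ℝ} (hv : v ∈ Phi rho) :
    -v ∈ Phi rho := by
  obtain ⟨w, p, rfl⟩ := hv
  exact ⟨w * cs.simple p, p, by
    rw [rho_mul_apply, rho_simple_sroot_self hrho, map_neg]⟩

lemma form_self_of_mem_phi (hrho : IsGeomRep M cs rho) {v : S → ℝ} (hv : v ∈ Phi rho) :
    form M v v = 2 := by
  obtain ⟨w, p, rfl⟩ := hv
  rw [form_rho hrho, form_sroot_self]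

lemma sroot_mem_phiPlus (p : S) : sroot p ∈ PhiPlus rho := by
  refine ⟨sroot_mem_phi p, fun q => ?_⟩
  rw [sroot, Pi.single_apply]
  split <;> norm_num

lemma phiPlus_minus_disjoint (hrho : IsGeomRep M cs rho) {v : S → ℝ}
    (h1 : v ∈ PhiPlus rho) (h2 : v ∈ PhiMinus rho) : False := by
  have hv0 : v = 0 := by
    funext q
    have ha := h1.2 q
    have hb := h2.2 q
    rw [Pi.neg_apply] at hb
    show v q = 0
    linarith
  have := form_self_of_mem_phi hrho h1.1
  rw [hv0] at this
  simp [form] at this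

lemma length_le_succ (w : W) (i : S) :
    cs.length w ≤ cs.length (w * cs.simple i) + 1 := by
  conv_lhs => rw [← cs.simple_mul_simple_cancel_right (w := w) i]
  have := cs.length_mul_le (w * cs.simple i) (cs.simple i)
  rw [cs.length_simple] at this
  exact this

lemma simple_comm {p q : S} (h : M p q = 2) :
    cs.simple p * cs.simple q = cs.simple q * cs.simple p := by
  have h4 : (cs.simple p * cs.simple q) ^ 2 = 1 := by
    rw [← h]; exact cs.simple_mul_simple_pow p q
  rw [sq] at h4
  have h5 : cs.simple p * cs.simple q = (cs.simple p * cs.simple q)⁻¹ :=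
    eq_inv_of_mul_eq_one_left h4
  rw [h5, mul_inv_rev, cs.inv_simple, cs.inv_simple]

lemma simple_braid {p q : S} (h : M p q = 3) :
    cs.simple p * cs.simple q * cs.simple p = cs.simple q * cs.simple p * cs.simple q := by
  have h6 : (cs.simple p * cs.simple q) ^ 3 = 1 := by
    rw [← h]; exact cs.simple_mul_simple_pow p q
  rw [pow_succ, pow_succ, pow_one] at h6
  have h1 : (cs.simple p * cs.simple q * cs.simple p) * (cs.simple q * cs.simple p * cs.simple q) = 1 := by
    rw [← h6]; group
  have h2 := eq_inv_of_mul_eq_one_left h1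
  rw [h2]
  simp [mul_inv_rev, mul_assoc]

theorem key_pos (hsmall : SmallType M) (hrho : IsGeomRep M cs rho) :
    ∀ n : ℕ, ∀ (w : W) (p : S), cs.length w = n → cs.length (w * cs.simple p) = n + 1 →
      rho w (sroot p) ∈ PhiPlus rho := by
  intro n
  induction n using Nat.strong_induction_on with
  | _ n ih =>
  intro w p hw hwp
  rcases Nat.eq_zero_or_pos n with h0 | hpos
  · have hone : w = 1 := cs.length_eq_zero_iff.mp (h0 ▸ hw)
    rw [hone, rho_one_apply]
    exact sroot_mem_phiPlus p
  · have hwne : w ≠ 1 := fun h => by rw [h, cs.length_one] at hw; omega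
    obtain ⟨t, ht⟩ := cs.exists_rightDescent_of_ne_one hwne
    unfold CoxeterSystem.IsRightDescent at ht
    have hwt : cs.length (w * cs.simple t) + 1 = n := by
      rcases cs.length_mul_simple w t with h | h
      · omega
      · omega
    have htp : t ≠ p := by
      rintro rfl
      omega
    set w1 := w * cs.simple t with hw1def
    have hw1t : w1 * cs.simple t = w := cs.simple_mul_simple_cancel_right t
    have hkey : rho w (sroot p) = rho w1 (rho (cs.simple t) (sroot p)) := by
      rw [← rho_mul_apply, hw1t]
    rcases cs.length_mul_simple w1 p with hup | hdown
    · have h1 : rho w1 (sroot p) ∈ PhiPlus rho :=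
        ih (n-1) (by omega) w1 p (by omega) (by rw [hup]; omega)
      have h2 : rho w1 (sroot t) ∈ PhiPlus rho :=
        ih (n-1) (by omega) w1 t (by omega) (by rw [hw1t]; omega)
      refine ⟨⟨w, p, rfl⟩, fun q => ?_⟩
      rw [hkey, hrho t (sroot p), map_sub, map_smul]
      rw [Pi.sub_apply, Pi.smul_apply, smul_eq_mul]
      have c1 := h1.2 q
      have c2 := h2.2 q
      rcases form_sroot_cases hsmall htp with ⟨he, _⟩ | ⟨he, _⟩ <;> rw [he] <;> nlinarith
    · rcases form_sroot_cases hsmall htp with ⟨he, hM2⟩ | ⟨he, hM3⟩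
      · exfalso
        have hcomm : cs.simple t * cs.simple p = cs.simple p * cs.simple t := simple_comm hM2
        have heq : w1 * cs.simple p = w * cs.simple p * cs.simple t := by
          rw [hw1def, mul_assoc, mul_assoc, hcomm]
        have hge := length_le_succ (cs := cs) (w * cs.simple p) t
        have hlen : cs.length (w1 * cs.simple p) = cs.length (w * cs.simple p * cs.simple t) := by
          rw [heq]
        omega
      · set w2 := w1 * cs.simple p with hw2def
        have hpt : form M (sroot p) (sroot t) = -1 := by
          rw [form_comm]; exact he
        rcases cs.length_mul_simple w2 t with hup2 | hdown2
        · have h2 : rho w2 (sroot t) ∈ PhiPlus rho :=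
            ih (cs.length w2) (by omega) w2 t rfl hup2
          have hvec : rho w (sroot p) = rho w2 (sroot t) := by
            have hw2t : w = w2 * cs.simple p * cs.simple t := by
              rw [hw2def, cs.simple_mul_simple_cancel_right, hw1t]
            rw [hw2t, rho_mul_apply, rho_mul_apply]
            have hA : rho (cs.simple t) (sroot p) = sroot p + sroot t := by
              rw [hrho, he, neg_smul, one_smul, sub_neg_eq_add]
            have hB : rho (cs.simple p) (sroot p + sroot t) = sroot t := by
              rw [hrho]
              have hc : form M (sroot p) (sroot p + sroot t) = 1 := by
                rw [form_add_right, form_sroot_self, hpt]; norm_num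
              rw [hc, one_smul]
              abel
            rw [hA, hB]
          rw [hvec]; exact h2
        · exfalso
          have hbraid : cs.simple t * cs.simple p * cs.simple t
              = cs.simple p * cs.simple t * cs.simple p := simple_braid hM3
          have heq2 : w * cs.simple p * cs.simple t * cs.simple p = w2 * cs.simple t := by
            have h1 : w2 * cs.simple t = w * (cs.simple t * cs.simple p * cs.simple t) := by
              rw [hw2def, hw1def]; group
            rw [h1, hbraid]; group
          have g1 := length_le_succ (cs := cs) (w * cs.simple p) t
          have g2 := length_le_succ (cs := cs) (w * cs.simple p * cs.simple t) p
          have hlen : cs.length (w * cs.simple p * cs.simple t * cs.simple p)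
              = cs.length (w2 * cs.simple t) := by rw [heq2]
          omega

theorem root_pos_or_neg (hsmall : SmallType M) (hrho : IsGeomRep M cs rho) (w : W) (p : S) :
    rho w (sroot p) ∈ PhiPlus rho ∨ rho w (sroot p) ∈ PhiMinus rho := by
  rcases cs.length_mul_simple w p with hup | hdown
  · exact Or.inl (key_pos hsmall hrho (cs.length w) w p rfl hup)
  · right
    set w' := w * cs.simple p with hw'def
    have hww : w' * cs.simple p = w := cs.simple_mul_simple_cancel_right p
    have h1 : cs.length (w' * cs.simple p) = cs.length w' + 1 := by
      rw [hww]; omega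
    have h2 : rho w' (sroot p) ∈ PhiPlus rho := key_pos hsmall hrho (cs.length w') w' p rfl h1
    have hvec : rho w (sroot p) = -rho w' (sroot p) := by
      conv_lhs => rw [← hww]
      rw [rho_mul_apply, rho_simple_sroot_self hrho, map_neg]
    show -rho w (sroot p) ∈ PhiPlus rho
    rw [hvec, neg_neg]
    exact h2

lemma mem_phiPlus_of_not_minus (hsmall : SmallType M) (hrho : IsGeomRep M cs rho)
    {v : S → ℝ} (hv : v ∈ Phi rho) (h : v ∉ PhiMinus rho) : v ∈ PhiPlus rho := by
  obtain ⟨w, p, rfl⟩ := hv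
  rcases root_pos_or_neg hsmall hrho w p with h1 | h1
  · exact h1
  · exact absurd h1 h

lemma eq_sroot_of_support (hrho : IsGeomRep M cs rho) {v : S → ℝ} (hv : v ∈ PhiPlus rho)
    (r : S) (hsupp : ∀ q, q ≠ r → v q = 0) : v = sroot r := by
  have hvr : v = v r • sroot r := by
    funext q
    by_cases hq : q = r
    · subst hq; simp [sroot, Pi.single_apply]
    · rw [hsupp q hq]; simp [sroot, Pi.single_apply, hq]
  have h2 : form M v v = 2 := form_self_of_mem_phi hrho hv.1
  rw [hvr, form_smul_left, form_smul_right, form_sroot_self] at h2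
  have : v r = 1 := by
    have := hv.2 r
    nlinarith
  rw [hvr, this, one_smul]

lemma exists_pos_coord (hrho : IsGeomRep M cs rho) {v : S → ℝ} (hv : v ∈ PhiPlus rho) :
    ∃ q, 0 < v q := by
  by_contra h
  push_neg at h
  have hv0 : v = 0 := by
    funext q
    exact le_antisymm (h q) (hv.2 q)
  have := form_self_of_mem_phi hrho hv.1
  rw [hv0] at this
  simp [form] at this

lemma reflect_mem_phiPlus (hsmall : SmallType M) (hrho : IsGeomRep M cs rho)
    {v : S → ℝ} (hv : v ∈ PhiPlus rho) (r : S) (hne : v ≠ sroot r) :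
    rho (cs.simple r) v ∈ PhiPlus rho := by
  have hq : ∃ q, q ≠ r ∧ 0 < v q := by
    by_contra h
    push_neg at h
    apply hne
    apply eq_sroot_of_support hrho hv r
    intro q hqr
    have := hv.2 q
    have := h q hqr
    linarith
  obtain ⟨q, hqr, hq⟩ := hq
  apply mem_phiPlus_of_not_minus hsmall hrho (rho_mem_phi _ hv.1)
  intro hmin
  have := hmin.2 q
  rw [Pi.neg_apply, hrho, Pi.sub_apply, Pi.smul_apply, smul_eq_mul] at this
  have hz : sroot r q = 0 := by simp [sroot, Pi.single_apply, hqr]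
  rw [hz] at this
  linarith

lemma neg_sroot_mem_minus (p : S) : -sroot p ∈ PhiMinus rho := by
  show -(-sroot p) ∈ PhiPlus rho
  rw [neg_neg]
  exact sroot_mem_phiPlus p

lemma dp_le (cs : CoxeterSystem M W) {v : S → ℝ} {w : W} (h : rho w v ∈ PhiMinus rho) :
    dp cs rho v ≤ cs.length w :=
  Nat.sInf_le ⟨w, h, rfl⟩

lemma dp_set_nonempty (hrho : IsGeomRep M cs rho) {v : S → ℝ} (hv : v ∈ Phi rho) :
    {l : ℕ | ∃ w : W, rho w v ∈ PhiMinus rho ∧ cs.length w = l}.Nonempty := by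
  obtain ⟨w, p, rfl⟩ := hv
  refine ⟨cs.length (cs.simple p * w⁻¹), cs.simple p * w⁻¹, ?_, rfl⟩
  rw [← rho_mul_apply, mul_assoc, inv_mul_cancel, mul_one, rho_simple_sroot_self hrho]
  exact neg_sroot_mem_minus p

lemma dp_spec (hrho : IsGeomRep M cs rho) {v : S → ℝ} (hv : v ∈ Phi rho) :
    ∃ w, rho w v ∈ PhiMinus rho ∧ cs.length w = dp cs rho v :=
  Nat.sInf_mem (dp_set_nonempty hrho hv)

lemma dp_minus {v : S → ℝ} (h : v ∈ PhiMinus rho) : dp cs rho v = 0 := by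
  have h1 : rho (1 : W) v ∈ PhiMinus rho := by rwa [rho_one_apply]
  have := dp_le cs h1
  rw [cs.length_one] at this
  omega

lemma mem_minus_of_dp_zero (hrho : IsGeomRep M cs rho) {v : S → ℝ} (hv : v ∈ Phi rho)
    (h : dp cs rho v = 0) : v ∈ PhiMinus rho := by
  rcases Nat.sInf_eq_zero.mp h with h0 | h0
  · obtain ⟨w, hm, hl⟩ := h0
    rw [cs.length_eq_zero_iff.mp hl, rho_one_apply] at hm
    exact hm
  · exact absurd (dp_set_nonempty hrho hv) (by rw [h0]; exact Set.not_nonempty_empty)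

lemma dp_pos (hrho : IsGeomRep M cs rho) {v : S → ℝ} (hv : v ∈ PhiPlus rho) :
    1 ≤ dp cs rho v := by
  by_contra h
  push_neg at h
  have h0 : dp cs rho v = 0 := by omega
  exact phiPlus_minus_disjoint hrho hv (mem_minus_of_dp_zero hrho hv.1 h0)

lemma dp_reflect_le (hrho : IsGeomRep M cs rho) {v : S → ℝ} (hv : v ∈ Phi rho) (r : S) :
    dp cs rho (rho (cs.simple r) v) ≤ dp cs rho v + 1 := by
  obtain ⟨w, hm, hl⟩ := dp_spec hrho hv
  have h1 : rho (w * cs.simple r) (rho (cs.simple r) v) ∈ PhiMinus rho := by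
    rw [← rho_mul_apply, mul_assoc, cs.simple_mul_simple_self, mul_one]
    exact hm
  have h2 := dp_le cs h1
  have h3 := cs.length_mul_le w (cs.simple r)
  rw [cs.length_simple] at h3
  omega

lemma dp_reflect_ge (hrho : IsGeomRep M cs rho) {v : S → ℝ} (hv : v ∈ Phi rho) (r : S) :
    dp cs rho v ≤ dp cs rho (rho (cs.simple r) v) + 1 := by
  have := dp_reflect_le hrho (rho_mem_phi (cs.simple r) hv) r
  rwa [rho_simple_sq] at this

lemma dp_sroot (hrho : IsGeomRep M cs rho) (p : S) : dp cs rho (sroot p) = 1 := by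
  have h1 : rho (cs.simple p) (sroot p) ∈ PhiMinus rho := by
    rw [rho_simple_sroot_self hrho]
    exact neg_sroot_mem_minus p
  have h2 := dp_le cs h1
  rw [cs.length_simple] at h2
  have h3 := dp_pos hrho (sroot_mem_phiPlus (rho := rho) p)
  omega

lemma descent_exists (hrho : IsGeomRep M cs rho) {v : S → ℝ} (hv : v ∈ Phi rho)
    (hd : 1 ≤ dp cs rho v) :
    ∃ r, dp cs rho (rho (cs.simple r) v) + 1 = dp cs rho v := by
  obtain ⟨w, hm, hl⟩ := dp_spec hrho hv
  have hw1 : w ≠ 1 := by intro h; rw [h, cs.length_one] at hl; omega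
  obtain ⟨r, hr⟩ := cs.exists_rightDescent_of_ne_one hw1
  unfold CoxeterSystem.IsRightDescent at hr
  refine ⟨r, ?_⟩
  have h1 : rho (w * cs.simple r) (rho (cs.simple r) v) ∈ PhiMinus rho := by
    rw [← rho_mul_apply, mul_assoc, cs.simple_mul_simple_self, mul_one]
    exact hm
  have h2 := dp_le cs h1
  have h3 : cs.length (w * cs.simple r) + 1 = cs.length w := by
    rcases cs.length_mul_simple w r with h | h
    · omega
    · omega
  have h4 := dp_reflect_ge hrho hv r
  omega

lemma dp_one_simple (hrho : IsGeomRep M cs rho) {v : S → ℝ} (hv : v ∈ PhiPlus rho)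
    (h1 : dp cs rho v = 1) : ∃ p, v = sroot p := by
  obtain ⟨w, hm, hl⟩ := dp_spec hrho hv.1
  rw [h1] at hl
  obtain ⟨r, rfl⟩ := cs.length_eq_one_iff.mp hl
  refine ⟨r, eq_sroot_of_support hrho hv r fun q hqr => ?_⟩
  have hx := hm.2 q
  rw [Pi.neg_apply, hrho, Pi.sub_apply, Pi.smul_apply, smul_eq_mul] at hx
  have hz : sroot r q = 0 := by simp [sroot, Pi.single_apply, hqr]
  rw [hz] at hx
  have := hv.2 q
  linarith

lemma descent_form_pos (hsmall : SmallType M) (hrho : IsGeomRep M cs rho)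
    {v : S → ℝ} (hv : v ∈ PhiPlus rho) {r : S}
    (hd : dp cs rho (rho (cs.simple r) v) + 1 = dp cs rho v) :
    0 < form M (sroot r) v := by
  by_contra hcle
  push_neg at hcle
  have hn1 : 1 ≤ dp cs rho v := dp_pos hrho hv
  have hc0 : form M (sroot r) v ≠ 0 := by
    intro h0
    have heq : rho (cs.simple r) v = v := by rw [hrho, h0, zero_smul, sub_zero]
    rw [heq] at hd
    omega
  have hvphi : rho (cs.simple r) v ∈ Phi rho := rho_mem_phi _ hv.1
  rcases Nat.eq_or_lt_of_le hn1 with h1 | h2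
  · have h0 : dp cs rho (rho (cs.simple r) v) = 0 := by omega
    have hmin := mem_minus_of_dp_zero hrho hvphi h0
    have hveq : v = sroot r := by
      apply eq_sroot_of_support hrho hv r
      intro q hqr
      have hx := hmin.2 q
      rw [Pi.neg_apply, hrho, Pi.sub_apply, Pi.smul_apply, smul_eq_mul] at hx
      have hz : sroot r q = 0 := by simp [sroot, Pi.single_apply, hqr]
      rw [hz] at hx
      have := hv.2 q
      linarith
    rw [hveq, form_sroot_self] at hcle
    linarith
  · obtain ⟨w, hm, hl⟩ := dp_spec hrho hvphi
    rcases cs.length_mul_simple w r with hup | hdown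
    · have hKL := key_pos hsmall hrho (cs.length w) w r rfl hup
      have hwv : rho w v ∈ PhiPlus rho := by
        apply mem_phiPlus_of_not_minus hsmall hrho (rho_mem_phi w hv.1)
        intro hcon
        have := dp_le cs hcon
        omega
      obtain ⟨q, hq⟩ := exists_pos_coord hrho hKL
      have hiden : rho w v - rho w (rho (cs.simple r) v)
          = form M (sroot r) v • rho w (sroot r) := by
        rw [hrho, map_sub, map_smul]
        abel
      have hminus := hm.2 q
      rw [Pi.neg_apply] at hminus
      have hplus := hwv.2 q
      have heq := congrFun hiden q
      rw [Pi.sub_apply, Pi.smul_apply, smul_eq_mul] at heq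
      nlinarith [lt_of_le_of_ne hcle hc0]
    · exfalso
      have h1 : rho (w * cs.simple r) v ∈ PhiMinus rho := by
        rw [rho_mul_apply]
        exact hm
      have := dp_le cs h1
      omega

lemma rho_triple (g1 g2 g3 : W) (x : S → ℝ) :
    rho (g1 * g2 * g3) x = rho g1 (rho g2 (rho g3 x)) := by
  rw [rho_mul_apply, rho_mul_apply]

theorem dp_decrease (hsmall : SmallType M) (hrho : IsGeomRep M cs rho) :
    ∀ n : ℕ, ∀ v : S → ℝ, v ∈ PhiPlus rho → dp cs rho v = n →
      ∀ r : S, 0 < form M (sroot r) v → dp cs rho (rho (cs.simple r) v) + 1 = n := by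
  intro n
  induction n using Nat.strong_induction_on with
  | _ n ih =>
  intro v hv hdp r hc
  by_cases hvr : v = sroot r
  · subst hvr
    rw [rho_simple_sroot_self hrho, dp_minus (neg_sroot_mem_minus r)]
    rw [← hdp, dp_sroot hrho]
  · have hv1 : rho (cs.simple r) v ∈ PhiPlus rho := reflect_mem_phiPlus hsmall hrho hv r hvr
    have hub := dp_reflect_le hrho hv.1 r
    have hlb := dp_reflect_ge hrho hv.1 r
    rw [hdp] at hub hlb
    have hne_up : dp cs rho (rho (cs.simple r) v) ≠ n + 1 := by
      intro hmeq
      have hd2 : dp cs rho (rho (cs.simple r) (rho (cs.simple r) v)) + 1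
          = dp cs rho (rho (cs.simple r) v) := by
        rw [rho_simple_sq, hdp, hmeq]
      have hpos := descent_form_pos hsmall hrho hv1 hd2
      have hneg : form M (sroot r) (rho (cs.simple r) v) = -form M (sroot r) v := by
        rw [hrho, form_sub_right, form_smul_right, form_sroot_self]
        ring
      rw [hneg] at hpos
      linarith
    have hne_eq : dp cs rho (rho (cs.simple r) v) ≠ n := by
      intro hmeq
      have hn1 : 1 ≤ n := by rw [← hdp]; exact dp_pos hrho hv
      rcases Nat.eq_or_lt_of_le hn1 with h1 | h2
      · obtain ⟨p, rfl⟩ := dp_one_simple hrho hv (by omega)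
        have hpr : p = r := by
          by_contra hpr
          rcases form_sroot_cases hsmall (show r ≠ p from fun h => hpr h.symm)
            with ⟨he, _⟩ | ⟨he, _⟩ <;> rw [he] at hc <;> linarith
        exact hvr (by rw [hpr])
      · obtain ⟨q, hq⟩ := descent_exists hrho hv.1 (by omega)
        rw [hdp] at hq
        have hbq : 0 < form M (sroot q) v :=
          descent_form_pos hsmall hrho hv (by rw [hdp]; exact hq)
        have hqr : q ≠ r := by
          rintro rfl
          omega
        have hvq_ne : v ≠ sroot q := by
          intro h
          rw [h, dp_sroot hrho] at hdp
          omega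
        have hv1q : rho (cs.simple q) v ∈ PhiPlus rho :=
          reflect_mem_phiPlus hsmall hrho hv q hvq_ne
        have hdpv1 : dp cs rho (rho (cs.simple q) v) = n - 1 := by omega
        rcases form_sroot_cases hsmall (show r ≠ q from fun h => hqr h.symm)
          with ⟨ha, hM2⟩ | ⟨ha, hM3⟩
        · by_cases hv1r : rho (cs.simple q) v = sroot r
          · have hqar : form M (sroot q) (sroot r) = 0 := by rw [form_comm]; exact ha
            have hveq : v = sroot r := by
              have h5 : v = rho (cs.simple q) (rho (cs.simple q) v) := (rho_simple_sq q v).symm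
              rw [hv1r, hrho, hqar, zero_smul, sub_zero] at h5
              exact h5
            exact hvr hveq
          · have hc1pos : 0 < form M (sroot r) (rho (cs.simple q) v) := by
              rw [hrho, form_sub_right, form_smul_right, ha]
              nlinarith
            have hd2 := ih (n-1) (by omega) _ hv1q hdpv1 r hc1pos
            have hvec : rho (cs.simple r) v
                = rho (cs.simple q) (rho (cs.simple r) (rho (cs.simple q) v)) := by
              have hcomm := simple_comm (cs := cs) hM2
              calc rho (cs.simple r) v
                  = rho (cs.simple r) (rho (cs.simple q) (rho (cs.simple q) v)) := by
                    rw [rho_simple_sq]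
                _ = rho (cs.simple r * cs.simple q) (rho (cs.simple q) v) := by
                    rw [rho_mul_apply]
                _ = rho (cs.simple q * cs.simple r) (rho (cs.simple q) v) := by rw [hcomm]
                _ = rho (cs.simple q) (rho (cs.simple r) (rho (cs.simple q) v)) := by
                    rw [rho_mul_apply]
            have hle := dp_reflect_le hrho
              (rho_mem_phi (cs.simple r) (rho_mem_phi (cs.simple q) hv.1)) q
            rw [← hvec] at hle
            omega
        · by_cases hv1r : rho (cs.simple q) v = sroot r
          · have hqar : form M (sroot q) (sroot r) = -1 := by rw [form_comm]; exact ha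
            have hveq : v = sroot r + sroot q := by
              have h5 : v = rho (cs.simple q) (rho (cs.simple q) v) := (rho_simple_sq q v).symm
              rw [hv1r, hrho, hqar, neg_smul, one_smul, sub_neg_eq_add] at h5
              exact h5
            have hrv : rho (cs.simple r) v = sroot q := by
              rw [hrho]
              have hcval : form M (sroot r) v = 1 := by
                rw [hveq, form_add_right, form_sroot_self, ha]
                norm_num
              rw [hcval, one_smul, hveq]
              abel
            rw [hrv, dp_sroot hrho] at hmeq
            omega
          · have hc1pos : 0 < form M (sroot r) (rho (cs.simple q) v) := by
              rw [hrho, form_sub_right, form_smul_right, ha]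
              nlinarith
            have hd2 := ih (n-1) (by omega) _ hv1q hdpv1 r hc1pos
            have hv2 : rho (cs.simple r) (rho (cs.simple q) v) ∈ PhiPlus rho :=
              reflect_mem_phiPlus hsmall hrho hv1q r hv1r
            have hdpv2pos := dp_pos hrho hv2
            have hqar : form M (sroot q) (sroot r) = -1 := by rw [form_comm]; exact ha
            have hqv1 : form M (sroot q) (rho (cs.simple q) v) = -form M (sroot q) v := by
              rw [hrho, form_sub_right, form_smul_right, form_sroot_self]
              ring
            have hrv1 : form M (sroot r) (rho (cs.simple q) v)
                = form M (sroot r) v + form M (sroot q) v := by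
              rw [hrho, form_sub_right, form_smul_right, ha]
              ring
            have hc2 : form M (sroot q) (rho (cs.simple r) (rho (cs.simple q) v))
                = form M (sroot r) v := by
              rw [hrho, form_sub_right, form_smul_right, hqar, hqv1, hrv1]
              ring
            have hd3 := ih (n-2) (by omega) _ hv2 (by omega) q (by rw [hc2]; exact hc)
            have hbraid : cs.simple q * cs.simple r * cs.simple q
                = cs.simple r * cs.simple q * cs.simple r := by
              apply simple_braid
              rw [M.symmetric]
              exact hM3
            have hvec2 : rho (cs.simple q) (rho (cs.simple r) (rho (cs.simple q) v))
                = rho (cs.simple r) (rho (cs.simple q) (rho (cs.simple r) v)) := by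
              rw [← rho_triple, ← rho_triple, hbraid]
            rw [hvec2] at hd3
            have e1 := dp_reflect_ge hrho (rho_mem_phi (cs.simple r) hv.1) q
            have e2 := dp_reflect_ge hrho
              (rho_mem_phi (cs.simple q) (rho_mem_phi (cs.simple r) hv.1)) r
            omega
    omega

lemma caseB_aux (hsmall : SmallType M) (hrho : IsGeomRep M cs rho)
    (T : S → (S → ℝ) → Polynomial ℚ) (hT : TSpec M cs rho T)
    (n : ℕ)
    (ih : ∀ m, m < n → ∀ u, u ∈ PhiPlus rho → dp cs rho u = m → ∀ s t : S,
      form M (sroot s) (sroot t) = -1 → form M (sroot s) u = 0 →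
      form M (sroot t) u = 0 → T s u = T t u)
    (u : S → ℝ) (hu : u ∈ PhiPlus rho) (hdp : dp cs rho u = n) (h2 : 1 < n)
    (s t r : S) (hst : form M (sroot s) (sroot t) = -1)
    (hs : form M (sroot s) u = 0) (ht : form M (sroot t) u = 0)
    (hr : dp cs rho (rho (cs.simple r) u) + 1 = n)
    (hb : 0 < form M (sroot r) u)
    (has : form M (sroot s) (sroot r) = -1)
    (hat : form M (sroot t) (sroot r) = 0) :
    T s u = T t u := by
  obtain ⟨hD1, hD2, hrec⟩ := hT
  have hts : form M (sroot t) (sroot s) = -1 := by rw [form_comm]; exact hst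
  have hsr_comm : form M (sroot r) (sroot s) = -1 := by rw [form_comm]; exact has
  have hrt_form : form M (sroot r) (sroot t) = 0 := by rw [form_comm]; exact hat
  have hu_ne_r : u ≠ sroot r := by
    intro h
    rw [h, dp_sroot hrho] at hdp
    omega
  set β1 := u - form M (sroot r) u • sroot r with hb1def
  have hu1mem : β1 ∈ PhiPlus rho := by
    have := reflect_mem_phiPlus hsmall hrho hu r hu_ne_r
    rwa [hrho, ← hb1def] at this
  have hdpu1 : dp cs rho β1 = n - 1 := by
    have h := hr
    rw [hrho, ← hb1def] at h
    omega
  have hsu1 : form M (sroot s) β1 = form M (sroot r) u := by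
    rw [hb1def, form_sub_right, form_smul_right, has, hs]
    ring
  have htu1 : form M (sroot t) β1 = 0 := by
    rw [hb1def, form_sub_right, form_smul_right, hat, ht]
    ring
  have hru1 : form M (sroot r) β1 = -form M (sroot r) u := by
    rw [hb1def, form_sub_right, form_smul_right, form_sroot_self]
    ring
  have hn3 : 3 ≤ n := by
    by_contra hlt
    have hd1 : dp cs rho β1 = 1 := by omega
    obtain ⟨p, hp⟩ := dp_one_simple hrho hu1mem hd1
    have hps : p = s := by
      by_contra hps
      rcases form_sroot_cases hsmall (show s ≠ p from fun h => hps h.symm)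
        with ⟨he, _⟩ | ⟨he, _⟩ <;> rw [hp, he] at hsu1 <;> linarith
    have h2b : form M (sroot s) β1 = 2 := by rw [hp, hps, form_sroot_self]
    have hminus : form M (sroot r) β1 = -1 := by
      rw [hp, hps, form_comm]
      exact has
    rw [hsu1] at h2b
    rw [hru1] at hminus
    linarith
  have hdp_s_u1 : dp cs rho (rho (cs.simple s) β1) + 1 = n - 1 :=
    dp_decrease hsmall hrho (n-1) β1 hu1mem hdpu1 s (by rw [hsu1]; exact hb)
  have hu1_ne_s : β1 ≠ sroot s := by
    intro h
    rw [h, dp_sroot hrho] at hdpu1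
    omega
  set β2 := β1 - form M (sroot s) β1 • sroot s with hb2def
  have hu2mem : β2 ∈ PhiPlus rho := by
    have := reflect_mem_phiPlus hsmall hrho hu1mem s hu1_ne_s
    rwa [hrho, ← hb2def] at this
  have hdpu2 : dp cs rho β2 = n - 2 := by
    have h := hdp_s_u1
    rw [hrho, ← hb2def] at h
    omega
  have hsu2 : form M (sroot s) β2 = -form M (sroot r) u := by
    rw [hb2def, form_sub_right, form_smul_right, form_sroot_self, hsu1]
    ring
  have htu2 : form M (sroot t) β2 = form M (sroot r) u := by
    rw [hb2def, form_sub_right, form_smul_right, htu1, hsu1, hts]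
    ring
  have hru2 : form M (sroot r) β2 = 0 := by
    rw [hb2def, form_sub_right, form_smul_right, hru1, hsu1, hsr_comm]
    ring
  have hn4 : 4 ≤ n := by
    by_contra hlt
    have hd1 : dp cs rho β2 = 1 := by omega
    obtain ⟨p, hp⟩ := dp_one_simple hrho hu2mem hd1
    have hpt : p = t := by
      by_contra hpt
      rcases form_sroot_cases hsmall (show t ≠ p from fun h => hpt h.symm)
        with ⟨he, _⟩ | ⟨he, _⟩ <;> rw [hp, he] at htu2 <;> linarith
    have h2b : form M (sroot t) β2 = 2 := by rw [hp, hpt, form_sroot_self]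
    have hminus : form M (sroot s) β2 = -1 := by
      rw [hp, hpt]
      exact hst
    rw [htu2] at h2b
    rw [hsu2] at hminus
    linarith
  have hdp_t_u2 : dp cs rho (rho (cs.simple t) β2) + 1 = n - 2 :=
    dp_decrease hsmall hrho (n-2) β2 hu2mem hdpu2 t (by rw [htu2]; exact hb)
  have hu2_ne_t : β2 ≠ sroot t := by
    intro h
    rw [h, dp_sroot hrho] at hdpu2
    omega
  set β3 := β2 - form M (sroot t) β2 • sroot t with hb3def
  have hu3mem : β3 ∈ PhiPlus rho := by
    have := reflect_mem_phiPlus hsmall hrho hu2mem t hu2_ne_t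
    rwa [hrho, ← hb3def] at this
  have hdpu3 : dp cs rho β3 = n - 3 := by
    have h := hdp_t_u2
    rw [hrho, ← hb3def] at h
    omega
  have hsu3 : form M (sroot s) β3 = 0 := by
    rw [hb3def, form_sub_right, form_smul_right, hsu2, htu2, hst]
    ring
  have hru3 : form M (sroot r) β3 = 0 := by
    rw [hb3def, form_sub_right, form_smul_right, hru2, htu2, hrt_form]
    ring
  have hIH : T s β3 = T r β3 :=
    ih (n-3) (by omega) β3 hu3mem hdpu3 s r has hsu3 hru3
  -- now the TSpec equations
  have E1 := (hrec s r u hu (by omega) hb (by omega)).2.2.1 hs has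
  have E2 := (hrec t r u hu (by omega) hb (by omega)).2.1 ht hat
  have E3 := (hrec s s β1 hu1mem (by omega) (by rw [hsu1]; exact hb) (by omega)).1
    (by rw [hsu1]; exact hb)
  have E4 := (hrec t s β1 hu1mem (by omega) (by rw [hsu1]; exact hb) (by omega)).2.2.1
    htu1 hts
  have E5 := (hrec r t β2 hu2mem (by omega) (by rw [htu2]; exact hb) (by omega)).2.1
    hru2 hrt_form
  have E6 := (hrec t t β2 hu2mem (by omega) (by rw [htu2]; exact hb) (by omega)).1
    (by rw [htu2]; exact hb)
  rw [← hb1def] at E1 E2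
  have harg1 : u - form M (sroot r) u • sroot s - form M (sroot r) u • sroot r = β2 := by
    rw [hb2def, hsu1, hb1def]
    abel
  rw [harg1] at E1
  rw [← hb2def] at E4
  have harg2 : β1 - form M (sroot s) β1 • sroot t - form M (sroot s) β1 • sroot s = β3 := by
    rw [hb3def, hb2def, htu2, hsu1]
    abel
  rw [harg2] at E4
  rw [← hb3def] at E5
  rw [E1, E2, E3, E4, E5, E6, ← hIH, hdpu1, hdpu2]
  obtain ⟨k, rfl⟩ : ∃ k, n = k + 4 := ⟨n - 4, by omega⟩
  have e1 : k + 4 - 1 = k + 3 := by omega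
  have e2 : k + 4 - 2 = k + 2 := by omega
  rw [e1, e2]
  ring

theorem main_T (hsmall : SmallType M) (hnt : NoTriangle M) (hrho : IsGeomRep M cs rho)
    (T : S → (S → ℝ) → Polynomial ℚ) (hT : TSpec M cs rho T) :
    ∀ n : ℕ, ∀ u : S → ℝ, u ∈ PhiPlus rho → dp cs rho u = n →
      ∀ s t : S, form M (sroot s) (sroot t) = -1 →
      form M (sroot s) u = 0 → form M (sroot t) u = 0 → T s u = T t u := by
  intro n
  induction n using Nat.strong_induction_on with
  | _ n ih =>
  intro u hu hdp s t hst hs ht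
  have hn1 : 1 ≤ n := by rw [← hdp]; exact dp_pos hrho hu
  have hstne : s ≠ t := by
    rintro rfl
    rw [form_sroot_self] at hst
    norm_num at hst
  rcases Nat.eq_or_lt_of_le hn1 with h1 | h2
  · obtain ⟨p, rfl⟩ := dp_one_simple hrho hu (by omega)
    have hps : p ≠ s := by
      rintro rfl
      rw [form_sroot_self] at hs
      norm_num at hs
    have hpt : p ≠ t := by
      rintro rfl
      rw [form_sroot_self] at ht
      norm_num at ht
    rw [hT.2.1 s p hps, hT.2.1 t p hpt]
  · obtain ⟨r, hr⟩ := descent_exists hrho hu.1 (by omega)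
    rw [hdp] at hr
    have hb : 0 < form M (sroot r) u :=
      descent_form_pos hsmall hrho hu (by rw [hdp]; exact hr)
    have hrs : r ≠ s := by
      rintro rfl
      rw [hs] at hb
      linarith
    have hrt : r ≠ t := by
      rintro rfl
      rw [ht] at hb
      linarith
    have hMst : M s t = 3 := by
      rcases form_sroot_cases hsmall hstne with ⟨he, _⟩ | ⟨_, h3⟩
      · rw [he] at hst; norm_num at hst
      · exact h3
    rcases form_sroot_cases hsmall (Ne.symm hrs) with ⟨has, hMsr⟩ | ⟨has, hMsr⟩ <;>
      rcases form_sroot_cases hsmall (Ne.symm hrt) with ⟨hat, hMtr⟩ | ⟨hat, hMtr⟩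
    · -- both orthogonal to r : case A
      obtain ⟨hD1, hD2, hrec⟩ := hT
      have hu_ne_r : u ≠ sroot r := by
        intro h
        rw [h, dp_sroot hrho] at hdp
        omega
      set β1 := u - form M (sroot r) u • sroot r with hb1def
      have hu1mem : β1 ∈ PhiPlus rho := by
        have := reflect_mem_phiPlus hsmall hrho hu r hu_ne_r
        rwa [hrho, ← hb1def] at this
      have hdpu1 : dp cs rho β1 = n - 1 := by
        have h := hr
        rw [hrho, ← hb1def] at h
        omega
      have hsu1 : form M (sroot s) β1 = 0 := by
        rw [hb1def, form_sub_right, form_smul_right, has, hs]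
        ring
      have htu1 : form M (sroot t) β1 = 0 := by
        rw [hb1def, form_sub_right, form_smul_right, hat, ht]
        ring
      have E1 := (hrec s r u hu (by omega) hb (by omega)).2.1 hs has
      have E2 := (hrec t r u hu (by omega) hb (by omega)).2.1 ht hat
      rw [← hb1def] at E1 E2
      have hIH : T s β1 = T t β1 :=
        ih (n-1) (by omega) β1 hu1mem hdpu1 s t hst hsu1 htu1
      rw [E1, E2, hIH]
    · -- form s r = 0, form t r = -1 : case C (swap roles)
      exact (caseB_aux hsmall hrho T hT n
        (fun m hm v hv hdpv s' t' h1 h2' h3 => ih m hm v hv hdpv s' t' h1 h2' h3)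
        u hu hdp h2 t s r (by rw [form_comm]; exact hst) ht hs hr hb hat has).symm
    · -- form s r = -1, form t r = 0 : case B
      exact caseB_aux hsmall hrho T hT n
        (fun m hm v hv hdpv s' t' h1 h2' h3 => ih m hm v hv hdpv s' t' h1 h2' h3)
        u hu hdp h2 s t r hst hs ht hr hb has hat
    · -- both -1 : triangle, contradiction
      exact absurd ⟨s, t, r, hstne, Ne.symm hrs, Ne.symm hrt,
        Or.inr (le_of_eq hMst.symm), Or.inr (le_of_eq hMsr.symm),
        Or.inr (le_of_eq hMtr.symm)⟩ hnt


end Lemma35Aux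

/-- **Lemma 3.5.** If `⟨α_s,α_t⟩ = -1`, `⟨α_s,β⟩ = 0` and `⟨α_t,β⟩ = 0`,
then `T(s,β) = T(t,β)`. -/
theorem stmt9 {S : Type} [DecidableEq S] [Fintype S] {W : Type} [Group W]
    (M : CoxeterMatrix S) (hsmall : SmallType M) (hnt : NoTriangle M)
    (cs : CoxeterSystem M W)
    (rho : W →* ((S → ℝ) →ₗ[ℝ] (S → ℝ))) (hrho : IsGeomRep M cs rho)
    (T : S → (S → ℝ) → Polynomial ℚ) (hT : TSpec M cs rho T)
    (s t : S) (u : S → ℝ) (hu : u ∈ PhiPlus rho)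
    (hst : form M (sroot s) (sroot t) = -1)
    (hs : form M (sroot s) u = 0) (ht : form M (sroot t) u = 0) :
    T s u = T t u :=
  main_T hsmall hnt hrho T hT (dp cs rho u) u hu rfl s t hst hs ht

end ArtinInj
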